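/- Let G be a finite simple even-hole-free graph. Then any two independent sets A and B of G with |A| = |B| are TJ-reconfigurable, with dist_TJ(A,B) = |A \ B|; in particular, for every s, the TJ-reconfiguration graph on the independent sets of G of size s is connected. -/

import Mathlib

variable {V : Type*} [DecidableEq V]

/-- `A` is an independent set of the graph `G`. -/
def IsIndep (G : SimpleGraph V) (A : Finset V) : Prop :=
  ∀ u ∈ A, ∀ v ∈ A, ¬G.Adj u v

/-- A graph is even-hole-free if it contains no induced cycle with an even number of
vertices (a hole has at least 4 vertices). -/
def EvenHoleFree {W : Type*} (H : SimpleGraph W) : Prop :=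
  ∀ n : ℕ, 4 ≤ n → n % 2 = 0 → IsEmpty (SimpleGraph.cycleGraph n ↪g H)

/-- Two independent sets are TJ-adjacent (differ by one token jump). -/
def TJAdj (A B : Finset V) : Prop :=
  A.card = B.card ∧ (A \ B).card = 1 ∧ (B \ A).card = 1

/-- There is a TJ-reconfiguration sequence of length `ℓ` from `A` to `B` in `G`. -/
def TJSeq (G : SimpleGraph V) (A B : Finset V) (ℓ : ℕ) : Prop :=
  ∃ ρ : ℕ → Finset V, ρ 0 = A ∧ ρ ℓ = B ∧ (∀ i ≤ ℓ, IsIndep G (ρ i)) ∧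
    ∀ i < ℓ, TJAdj (ρ i) (ρ (i + 1))

/-!
Put `X = A \ B` and `Y = B \ A`. Every cycle of `G` inside `X ∪ Y` alternates between the
independent sets `X` and `Y`, so a shortest one is an induced even cycle of length at least four:
in an even-hole-free graph the edges between `X` and `Y` form a forest. Peeling off leaves shows
that if every vertex of `Y` had two neighbours in `X`, then `|Y| < |X|`, impossible when
`|X| = |Y|`. Hence some `b ∈ Y` has at most one neighbour `a` in `X` (any `a ∈ X` if it has
none), and the jump of the token on `a` to `b` keeps `A` independent and decreases `|A \ B|` by
one. No jump decreases `|A \ B|` by more than one, so this is optimal.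
-/

lemma Fin.val_sub_eq_one_iff {n : ℕ} (hn : 2 ≤ n) {a b : Fin n} :
    (a - b).val = 1 ↔ a.val = b.val + 1 ∨ (a.val = 0 ∧ b.val = n - 1) := by
  have := a.isLt
  have := b.isLt
  rcases le_or_gt b a with hba | hab
  · rw [Fin.sub_val_of_le hba]
    have := Fin.le_def.mp hba
    omega
  · rw [Fin.coe_sub_iff_lt.mpr hab]
    have := Fin.lt_def.mp hab
    omega

section Cycles

variable {W : Type*} {G : SimpleGraph W} {S : Finset W} {n : ℕ} {f : ℕ → W}

lemma IsIndep.mono {A B : Finset W} (hA : IsIndep G A) (hBA : B ⊆ A) : IsIndep G B :=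
  fun u hu v hv => hA u (hBA hu) v (hBA hv)

structure IsPathSeq (G : SimpleGraph W) (S : Finset W) (m : ℕ) (p : ℕ → W) : Prop where
  mem : ∀ i < m, p i ∈ S
  injOn : ∀ i < m, ∀ j < m, p i = p j → i = j
  adj : ∀ i, i + 1 < m → G.Adj (p i) (p (i + 1))

/-- A cycle `f 0, …, f (n - 1)` of `G` inside `S`, possibly with chords. -/
structure IsCycleSeq (G : SimpleGraph W) (S : Finset W) (n : ℕ) (f : ℕ → W) : Prop
    extends IsPathSeq G S n f where
  three_le : 3 ≤ n
  adj_last : G.Adj (f (n - 1)) (f 0)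

structure IsInducedCycleSeq (G : SimpleGraph W) (S : Finset W) (n : ℕ) (f : ℕ → W) : Prop
    extends IsCycleSeq G S n f where
  chordless : ∀ i j, i + 2 ≤ j → j < n → G.Adj (f i) (f j) → i = 0 ∧ j = n - 1

lemma IsPathSeq.le_card {m : ℕ} {p : ℕ → W} (h : IsPathSeq G S m p) : m ≤ S.card := by
  simpa using Finset.card_le_card_of_injOn (s := Finset.range m) p
    (fun i hi => h.mem i (Finset.mem_range.mp hi))
    (fun i hi j hj => h.injOn i (Finset.mem_range.mp hi) j (Finset.mem_range.mp hj))

lemma IsPathSeq.snoc {m : ℕ} {p : ℕ → W} {w : W} (h : IsPathSeq G S m p) (hm : 0 < m)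
    (hw : w ∈ S) (hnew : ∀ i < m, p i ≠ w) (hadj : G.Adj (p (m - 1)) w) :
    IsPathSeq G S (m + 1) (Function.update p m w) := by
  have hupd : ∀ i < m, Function.update p m w i = p i := fun i hi =>
    Function.update_of_ne (by omega) _ _
  refine ⟨fun i hi => ?_, fun i hi j hj hij => ?_, fun i hi => ?_⟩
  · rcases Nat.lt_succ_iff_lt_or_eq.mp hi with hi | rfl
    · rw [hupd i hi]; exact h.mem i hi
    · simpa using hw
  · rcases Nat.lt_succ_iff_lt_or_eq.mp hi with hi | rfl <;>
      rcases Nat.lt_succ_iff_lt_or_eq.mp hj with hj | rfl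
    · rw [hupd i hi, hupd j hj] at hij; exact h.injOn i hi j hj hij
    · rw [hupd i hi, Function.update_self] at hij; exact absurd hij (hnew i hi)
    · rw [hupd j hj, Function.update_self] at hij; exact absurd hij.symm (hnew j hj)
    · rfl
  · rcases Nat.lt_succ_iff_lt_or_eq.mp hi with hi | hi
    · rw [hupd i (by omega), hupd (i + 1) hi]; exact h.adj i hi
    · rw [hupd i (by omega), ← hi, Function.update_self, show i = m - 1 by omega]; exact hadj

lemma IsPathSeq.isCycleSeq_of_adj {m i j : ℕ} {p : ℕ → W} (h : IsPathSeq G S m p)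
    (hij : i + 2 ≤ j) (hj : j < m) (hadj : G.Adj (p j) (p i)) :
    IsCycleSeq G S (j - i + 1) (fun k => p (i + k)) where
  mem k hk := h.mem _ (by omega)
  injOn k hk l hl hkl := by have := h.injOn _ (by omega) _ (by omega) hkl; omega
  adj k hk := by simpa only [← add_assoc] using h.adj (i + k) (by omega)
  three_le := by omega
  adj_last := by simpa [show i + (j - i) = j by omega] using hadj

lemma exists_isCycleSeq_of_nontrivial_neighborSet (hS : S.Nonempty)
    (hdeg : ∀ v ∈ S, (G.neighborSet v ∩ S).Nontrivial) : ∃ n f, IsCycleSeq G S n f := by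
  classical
  set P : Set ℕ := {m | ∃ p, IsPathSeq G S m p}
  obtain ⟨v, hv⟩ := hS
  have h1 : 1 ∈ P := ⟨fun _ => v, fun _ _ => hv, fun i hi j hj _ => by omega,
    fun i hi => by omega⟩
  have hbdd : BddAbove P := ⟨S.card, fun m ⟨_, hp⟩ => hp.le_card⟩
  obtain ⟨p, hp⟩ : sSup P ∈ P := Nat.sSup_mem ⟨1, h1⟩ hbdd
  set m := sSup P
  have hm : 1 ≤ m := le_csSup hbdd h1
  -- the last vertex of a longest path has a second neighbour, which lies on the path
  obtain ⟨x₁, ⟨hx₁, hx₁S⟩, x₂, ⟨hx₂, hx₂S⟩, hne⟩ :=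
    hdeg _ (hp.mem (m - 1) (by omega))
  obtain ⟨w, hw, hwS, hwp⟩ : ∃ w, G.Adj (p (m - 1)) w ∧ w ∈ S ∧ w ≠ p (m - 2) := by
    by_cases h : x₁ = p (m - 2)
    · exact ⟨x₂, hx₂, hx₂S, h ▸ hne.symm⟩
    · exact ⟨x₁, hx₁, hx₁S, h⟩
  by_cases hold : ∃ k < m, p k = w
  · obtain ⟨k, hk, rfl⟩ := hold
    have hk1 : k ≠ m - 1 := fun he => G.ne_of_adj hw (congrArg p he).symm
    have hk2 : k ≠ m - 2 := fun he => hwp (congrArg p he)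
    exact ⟨_, _, hp.isCycleSeq_of_adj (i := k) (j := m - 1) (by omega) (by omega) hw⟩
  · push Not at hold
    have := le_csSup hbdd ⟨_, hp.snoc (by omega) hwS hold hw⟩
    omega

lemma IsCycleSeq.exists_isInducedCycleSeq (h : IsCycleSeq G S n f) :
    ∃ n f, IsInducedCycleSeq G S n f := by
  classical
  have hex : ∃ n f, IsCycleSeq G S n f := ⟨n, f, h⟩
  obtain ⟨g, hg⟩ := Nat.find_spec hex
  refine ⟨_, g, hg, fun i j hij hj hadj => ?_⟩
  -- a chord of a shortest cycle would cut off a shorter cycle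
  have := Nat.find_min' hex ⟨_, hg.isCycleSeq_of_adj hij hj hadj.symm⟩
  omega

lemma IsInducedCycleSeq.adj_iff (h : IsInducedCycleSeq G S n f) {i j : ℕ} (hi : i < n)
    (hj : j < n) :
    G.Adj (f i) (f j) ↔
      (i = j + 1 ∨ (i = 0 ∧ j = n - 1)) ∨ (j = i + 1 ∨ (j = 0 ∧ i = n - 1)) := by
  constructor
  · intro hadj
    rcases lt_trichotomy i j with hij | rfl | hij
    · by_cases hchord : i + 2 ≤ j
      · have := h.chordless i j hchord hj hadj; omega
      · omega
    · exact absurd hadj (G.loopless.irrefl _)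
    · by_cases hchord : j + 2 ≤ i
      · have := h.chordless j i hchord hi hadj.symm; omega
      · omega
  · rintro ((rfl | ⟨rfl, rfl⟩) | rfl | ⟨rfl, rfl⟩)
    · exact (h.adj j hi).symm
    · exact h.adj_last.symm
    · exact h.adj i hj
    · exact h.adj_last

lemma IsInducedCycleSeq.nonempty_embedding (h : IsInducedCycleSeq G S n f) :
    Nonempty (SimpleGraph.cycleGraph n ↪g G) :=
  ⟨{ toFun i := f i
     inj' a b hab := Fin.ext (h.injOn _ a.isLt _ b.isLt hab)
     map_rel_iff' {a b} := by
       have := h.three_le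
       rw [SimpleGraph.cycleGraph_adj', Fin.val_sub_eq_one_iff (by omega),
         Fin.val_sub_eq_one_iff (by omega)]
       exact h.adj_iff a.isLt b.isLt }⟩

end Cycles

section Reconfiguration

variable {G : SimpleGraph V} {A A' B X Y : Finset V} {ℓ : ℕ}

lemma IsIndep.insert {b : V} (hA : IsIndep G A) (hb : ∀ v ∈ A, ¬G.Adj b v) :
    IsIndep G (insert b A) := by
  intro u hu v hv
  rcases Finset.mem_insert.mp hu with rfl | huA <;>
    rcases Finset.mem_insert.mp hv with rfl | hvA
  · exact G.loopless.irrefl _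
  · exact hb v hvA
  · exact fun h => hb u huA h.symm
  · exact hA u huA v hvA

lemma IsIndep.mem_iff_notMem_of_adj (hX : IsIndep G X) (hY : IsIndep G Y) {u v : V}
    (hu : u ∈ X ∪ Y) (hv : v ∈ X ∪ Y) (huv : G.Adj u v) : u ∈ X ↔ v ∉ X := by
  rw [Finset.mem_union] at hu hv
  constructor
  · exact fun huX hvX => hX u huX v hvX huv
  · intro hvX
    by_contra huX
    exact hY u (hu.resolve_left huX) v (hv.resolve_left hvX) huv

lemma IsCycleSeq.even_of_isIndep {n : ℕ} {f : ℕ → V} (h : IsCycleSeq G (X ∪ Y) n f)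
    (hX : IsIndep G X) (hY : IsIndep G Y) : Even n := by
  have := h.three_le
  have hside : ∀ k < n, ((f k ∈ X ↔ f 0 ∈ X) ↔ Even k) := by
    intro k
    induction k with
    | zero => simp
    | succ k ih =>
      intro hk
      have := hX.mem_iff_notMem_of_adj hY (h.mem k (by omega)) (h.mem (k + 1) hk) (h.adj k hk)
      rw [Nat.even_add_one, ← ih (by omega)]
      tauto
  have := hX.mem_iff_notMem_of_adj hY (h.mem (n - 1) (by omega)) (h.mem 0 (by omega)) h.adj_last
  have hodd : ¬Even (n - 1) := by
    rw [← hside (n - 1) (by omega)]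
    tauto
  rwa [show n = n - 1 + 1 by omega, Nat.even_add_one]

lemma EvenHoleFree.not_isCycleSeq (hehf : EvenHoleFree G) (hX : IsIndep G X) (hY : IsIndep G Y)
    {n : ℕ} {f : ℕ → V} (h : IsCycleSeq G (X ∪ Y) n f) : False := by
  obtain ⟨m, g, hg⟩ := h.exists_isInducedCycleSeq
  have heven := hg.even_of_isIndep hX hY
  obtain ⟨e⟩ := hg.nonempty_embedding
  have := hg.three_le
  exact (hehf m (by rcases heven with ⟨k, rfl⟩; omega) (Nat.even_iff.mp heven)).false e

lemma EvenHoleFree.exists_subsingleton_neighborSet (hehf : EvenHoleFree G)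
    (hX : IsIndep G X) (hY : IsIndep G Y) (hYne : Y.Nonempty)
    (hdeg : ∀ y ∈ Y, (G.neighborSet y ∩ X).Nontrivial) :
    ∃ x ∈ X, (G.neighborSet x ∩ Y).Subsingleton := by
  by_contra! hcycle
  have hS : ∀ v ∈ X ∪ Y, (G.neighborSet v ∩ ↑(X ∪ Y)).Nontrivial := by
    intro v hv
    rw [Finset.coe_union]
    rcases Finset.mem_union.mp hv with hv | hv
    · exact (hcycle v hv).mono (Set.inter_subset_inter_right _ Set.subset_union_right)
    · exact (hdeg v hv).mono (Set.inter_subset_inter_right _ Set.subset_union_left)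
  obtain ⟨n, f, h⟩ :=
    exists_isCycleSeq_of_nontrivial_neighborSet (hYne.mono Finset.subset_union_right) hS
  exact hehf.not_isCycleSeq hX hY h

lemma EvenHoleFree.card_lt_of_nontrivial_neighborSet (hehf : EvenHoleFree G)
    (hX : IsIndep G X) (hY : IsIndep G Y) (hYne : Y.Nonempty)
    (hdeg : ∀ y ∈ Y, (G.neighborSet y ∩ X).Nontrivial) : Y.card < X.card := by
  classical
  induction X using Finset.strongInduction generalizing Y with
  | H X ih =>
    -- delete a leaf `x ∈ X` together with its neighbour in `Y`, if any
    obtain ⟨x, hx, hleaf⟩ := hehf.exists_subsingleton_neighborSet hX hY hYne hdeg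
    set Y' := Y.filter fun y => ¬G.Adj x y
    have hY' : Y.card ≤ Y'.card + 1 := by
      have hnbr : (Y.filter (G.Adj x)).card ≤ 1 :=
        Finset.card_le_one.mpr fun a ha b hb => by
          rw [Finset.mem_filter] at ha hb
          exact hleaf ⟨ha.2, ha.1⟩ ⟨hb.2, hb.1⟩
      calc Y.card ≤ (Y' ∪ Y.filter (G.Adj x)).card :=
            Finset.card_le_card fun y hy => by by_cases h : G.Adj x y <;> simp [Y', hy, h]
        _ ≤ Y'.card + 1 := (Finset.card_union_le _ _).trans (by omega)
    rcases Y'.eq_empty_or_nonempty with hempty | hY'ne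
    · obtain ⟨y, hy⟩ := hYne
      obtain ⟨x₁, ⟨-, hx₁⟩, x₂, ⟨-, hx₂⟩, hne⟩ := hdeg y hy
      have := Finset.one_lt_card.mpr ⟨x₁, hx₁, x₂, hx₂, hne⟩
      rw [hempty, Finset.card_empty] at hY'
      omega
    · have := ih (X.erase x) (Finset.erase_ssubset hx) (Y := Y') (hX.mono (X.erase_subset x))
        (hY.mono (Finset.filter_subset _ Y)) hY'ne fun y hy => by
          obtain ⟨hy, hxy⟩ := Finset.mem_filter.mp hy
          refine (hdeg y hy).mono fun z ⟨hyz, hz⟩ => ⟨hyz, Finset.mem_erase.mpr ⟨?_, hz⟩⟩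
          rintro rfl
          exact hxy hyz.symm
      rw [Finset.card_erase_of_mem hx] at this
      omega

lemma EvenHoleFree.exists_isIndep_insert_erase (hehf : EvenHoleFree G) (hA : IsIndep G A)
    (hB : IsIndep G B) (hcard : A.card = B.card) (hne : A ≠ B) :
    ∃ a ∈ A \ B, ∃ b ∈ B \ A, IsIndep G (insert b (A.erase a)) := by
  have hcard' : (A \ B).card = (B \ A).card := Finset.card_sdiff_comm hcard
  have hBA : (B \ A).Nonempty := by
    rw [Finset.nonempty_iff_ne_empty, Ne, Finset.sdiff_eq_empty_iff_subset]
    exact fun h => hne (Finset.eq_of_subset_of_card_le h hcard.le).symm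
  have hAB : (A \ B).Nonempty := by
    rw [← Finset.card_pos, hcard']
    exact hBA.card_pos
  obtain ⟨b, hb, hleaf⟩ : ∃ b ∈ B \ A, (G.neighborSet b ∩ ↑(A \ B)).Subsingleton := by
    by_contra! h
    exact (hehf.card_lt_of_nontrivial_neighborSet (hA.mono Finset.sdiff_subset)
      (hB.mono Finset.sdiff_subset) hBA h).ne hcard'.symm
  obtain ⟨a, ha, hba⟩ : ∃ a ∈ A \ B, ∀ x ∈ A \ B, G.Adj b x → x = a := by
    by_cases hN : ∃ a ∈ A \ B, G.Adj b a
    · obtain ⟨a, ha, hab⟩ := hN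
      exact ⟨a, ha, fun x hx hbx => hleaf ⟨hbx, hx⟩ ⟨hab, ha⟩⟩
    · push Not at hN
      obtain ⟨a, ha⟩ := hAB
      exact ⟨a, ha, fun x hx hbx => absurd hbx (hN x hx)⟩
  refine ⟨a, ha, b, hb, (hA.mono (A.erase_subset a)).insert fun v hv hbv => ?_⟩
  obtain ⟨hva, hvA⟩ := Finset.mem_erase.mp hv
  by_cases hvB : v ∈ B
  · exact hB b (Finset.mem_sdiff.mp hb).1 v hvB hbv
  · exact hva (hba v (Finset.mem_sdiff.mpr ⟨hvA, hvB⟩) hbv)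

lemma tjSeq_zero_iff : TJSeq G A B 0 ↔ IsIndep G A ∧ A = B := by
  constructor
  · rintro ⟨ρ, rfl, rfl, hind, -⟩
    exact ⟨hind 0 le_rfl, rfl⟩
  · rintro ⟨hA, rfl⟩
    exact ⟨fun _ => A, rfl, rfl, fun _ _ => hA, fun _ h => absurd h (Nat.not_lt_zero _)⟩

lemma tjSeq_succ_iff :
    TJSeq G A B (ℓ + 1) ↔ IsIndep G A ∧ ∃ A', TJAdj A A' ∧ TJSeq G A' B ℓ := by
  constructor
  · rintro ⟨ρ, rfl, hB, hind, hadj⟩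
    exact ⟨hind 0 (by omega), ρ 1, hadj 0 (by omega), fun i => ρ (i + 1), rfl, hB,
      fun i hi => hind _ (by omega), fun i hi => hadj _ (by omega)⟩
  · rintro ⟨hA, A', hAA', ρ, rfl, hB, hind, hadj⟩
    refine ⟨fun | 0 => A | i + 1 => ρ i, rfl, hB, ?_, ?_⟩
    · rintro (_ | i) hi
      exacts [hA, hind i (by omega)]
    · rintro (_ | i) hi
      exacts [hAA', hadj i (by omega)]

lemma tjAdj_insert_erase {a b : V} (ha : a ∈ A) (hb : b ∉ A) :
    TJAdj A (insert b (A.erase a)) := by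
  have hb' : b ∉ A.erase a := fun h => hb (Finset.mem_of_mem_erase h)
  refine ⟨?_, ?_, ?_⟩
  · rw [Finset.card_insert_of_notMem hb', Finset.card_erase_add_one ha]
  · rw [Finset.sdiff_insert, Finset.sdiff_erase_self ha,
      Finset.erase_eq_of_notMem (Finset.notMem_singleton.mpr (ne_of_mem_of_not_mem ha hb).symm),
      Finset.card_singleton]
  · rw [Finset.insert_sdiff_of_notMem _ hb, Finset.erase_sdiff_comm, Finset.sdiff_self]
    simp

lemma TJAdj.card_sdiff_le (h : TJAdj A A') (B : Finset V) :
    (A \ B).card ≤ (A' \ B).card + 1 :=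
  calc (A \ B).card ≤ (A' \ B ∪ A \ A').card :=
        Finset.card_le_card fun x hx => by
          simp only [Finset.mem_union, Finset.mem_sdiff] at hx ⊢
          tauto
    _ ≤ (A' \ B).card + 1 := (Finset.card_union_le _ _).trans_eq (by rw [h.2.1])

lemma TJSeq.card_sdiff_le (h : TJSeq G A B ℓ) : (A \ B).card ≤ ℓ := by
  induction ℓ generalizing A with
  | zero =>
    obtain ⟨-, rfl⟩ := tjSeq_zero_iff.mp h
    simp
  | succ ℓ ih =>
    obtain ⟨-, A', hAA', h'⟩ := tjSeq_succ_iff.mp h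
    have := hAA'.card_sdiff_le B
    have := ih h'
    omega

lemma EvenHoleFree.tjSeq_card_sdiff (hehf : EvenHoleFree G) (hA : IsIndep G A)
    (hB : IsIndep G B) (hcard : A.card = B.card) : TJSeq G A B (A \ B).card := by
  induction hd : (A \ B).card generalizing A with
  | zero =>
    have hAB : A ⊆ B := Finset.sdiff_eq_empty_iff_subset.mp (Finset.card_eq_zero.mp hd)
    exact tjSeq_zero_iff.mpr ⟨hA, Finset.eq_of_subset_of_card_le hAB hcard.ge⟩
  | succ d ih =>
    have hne : A ≠ B := by
      rintro rfl
      simp at hd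
    obtain ⟨a, ha, b, hb, hA'⟩ := hehf.exists_isIndep_insert_erase hA hB hcard hne
    have hjump := tjAdj_insert_erase (Finset.mem_sdiff.mp ha).1 (Finset.mem_sdiff.mp hb).2
    refine tjSeq_succ_iff.mpr ⟨hA, _, hjump, ih hA' (hjump.1.symm.trans hcard) ?_⟩
    rw [Finset.insert_sdiff_of_mem _ (Finset.mem_sdiff.mp hb).1, Finset.erase_sdiff_comm,
      Finset.card_erase_of_mem ha, hd, Nat.add_sub_cancel]

end Reconfiguration

theorem stmt16_general {V : Type*} [DecidableEq V] (G : SimpleGraph V)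
    (hehf : EvenHoleFree G) :
    (∀ A B : Finset V, IsIndep G A → IsIndep G B → A.card = B.card →
      (∃ ℓ, TJSeq G A B ℓ) ∧ IsLeast {ℓ | TJSeq G A B ℓ} ((A \ B).card)) ∧
    (∀ s : ℕ, ∀ A B : Finset V, IsIndep G A → IsIndep G B → A.card = s → B.card = s →
      ∃ ℓ, TJSeq G A B ℓ) := by
  refine ⟨fun A B hA hB hcard => ?_, fun s A B hA hB hAs hBs => ?_⟩
  · have hseq := hehf.tjSeq_card_sdiff hA hB hcard
    exact ⟨⟨_, hseq⟩, hseq, fun ℓ hℓ => TJSeq.card_sdiff_le hℓ⟩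
  · exact ⟨_, hehf.tjSeq_card_sdiff hA hB (hAs.trans hBs.symm)⟩

/-- in a finite even-hole-free graph, any two independent sets of the same
size are TJ-reconfigurable with TJ-distance `|A \ B|`; in particular, for every `s`, any
two independent sets of size `s` are TJ-reconfigurable, i.e. the TJ-reconfiguration graph
on independent sets of size `s` is connected. -/
theorem stmt16 {V : Type*} [DecidableEq V] [Fintype V] (G : SimpleGraph V)
    (hehf : EvenHoleFree G) :
    (∀ A B : Finset V, IsIndep G A → IsIndep G B → A.card = B.card →
      (∃ ℓ, TJSeq G A B ℓ) ∧ IsLeast {ℓ | TJSeq G A B ℓ} ((A \ B).card)) ∧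
    (∀ s : ℕ, ∀ A B : Finset V, IsIndep G A → IsIndep G B → A.card = s → B.card = s →
      ∃ ℓ, TJSeq G A B ℓ) :=
  stmt16_general G hehf
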